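/- arXiv:2204.07694 — 5 statements merged into one kernel-verified Lean document; each statement's English description precedes it below -/
import Mathlib

section
/- For any density matrices ρ, σ on a finite-dimensional complex Hilbert space with σ positive definite and any n ∈ (0,∞) with n ≠ 1, the sandwiched Rényi relative entropy satisfies S_n(ρ‖σ) ≥ 0, and S_n(ρ‖σ) = 0 if and only if ρ = σ. -/
open Matrix
open scoped Kronecker ComplexOrder

/-- Real power of a Hermitian matrix via the spectral functional calculus
(junk value `0` on non-Hermitian matrices). -/
noncomputable def mpow {m : Type*} [Fintype m] [DecidableEq m]
    (A : Matrix m m ℂ) (r : ℝ) : Matrix m m ℂ :=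
  if hA : A.IsHermitian then
    (hA.eigenvectorUnitary : Matrix m m ℂ) *
      Matrix.diagonal (fun i => ((hA.eigenvalues i ^ r : ℝ) : ℂ)) *
      (star (hA.eigenvectorUnitary : Matrix m m ℂ))
  else 0

/-- Logarithm of a Hermitian matrix via the spectral functional calculus
(junk value `0` on non-Hermitian matrices). -/
noncomputable def mlog {m : Type*} [Fintype m] [DecidableEq m]
    (A : Matrix m m ℂ) : Matrix m m ℂ :=
  if hA : A.IsHermitian then
    (hA.eigenvectorUnitary : Matrix m m ℂ) *
      Matrix.diagonal (fun i => ((Real.log (hA.eigenvalues i) : ℝ) : ℂ)) *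
      (star (hA.eigenvectorUnitary : Matrix m m ℂ))
  else 0

/-- A density matrix: positive semidefinite with unit trace. -/
def IsDensity {m : Type*} [Fintype m] [DecidableEq m] (A : Matrix m m ℂ) : Prop :=
  A.PosSemidef ∧ A.trace = 1

/-- Sandwiched Rényi relative entropy
`S_n(ρ‖σ) = (n-1)⁻¹ log Tr[(σ^{(1-n)/(2n)} ρ σ^{(1-n)/(2n)})^n]`. -/
noncomputable def SRenyi {m : Type*} [Fintype m] [DecidableEq m]
    (n : ℝ) (ρ σ : Matrix m m ℂ) : ℝ :=
  (n - 1)⁻¹ *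
    Real.log ((mpow (mpow σ ((1 - n) / (2 * n)) * ρ * mpow σ ((1 - n) / (2 * n))) n).trace.re)

/-- Quantum relative entropy `S(ρ‖σ) = Tr(ρ log ρ) - Tr(ρ log σ)`. -/
noncomputable def relEnt {m : Type*} [Fintype m] [DecidableEq m]
    (ρ σ : Matrix m m ℂ) : ℝ :=
  ((ρ * mlog ρ).trace - (ρ * mlog σ).trace).re

/-- von Neumann entropy `S(τ) = -Tr(τ log τ)`. -/
noncomputable def vnEnt {m : Type*} [Fintype m] [DecidableEq m]
    (τ : Matrix m m ℂ) : ℝ :=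
  -((τ * mlog τ).trace.re)

/-!
Put `A = σ^a ρ σ^a` with `a = (1 - n) / (2n)`, so that `S_n(ρ‖σ) = (n - 1)⁻¹ log Tr Aⁿ`.
Expand `A` and `σ` in eigenbases `(λᵢ, aᵢ)` and `(sⱼ, bⱼ)`; the overlaps `cᵢⱼ = |⟪aᵢ, bⱼ⟫|²` form
a doubly stochastic matrix. Then `wᵢⱼ = cᵢⱼ sⱼ` is a probability distribution on pairs, and for
`vᵢⱼ = λᵢ / sⱼ^(1/n)` one gets `∑ w v = Tr ρ = 1` and `∑ w vⁿ = Tr Aⁿ`. Hence `S_n(ρ‖σ)` is the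
classical Rényi divergence of `w v` from `w`, which is nonnegative by Bernoulli's inequality
`(n - 1) (xⁿ - 1 - n (x - 1)) ≥ 0`, with equality iff `v = 1` on the support of `w`, that is,
iff `A = σ^(1/n)`, that is, iff `ρ = σ`.
-/

section Bernoulli

variable {p x : ℝ}

lemma sub_one_mul_bernoulli_gap_pos (hx : 0 ≤ x) (hp : 0 < p) (hp1 : p ≠ 1) (hx1 : x ≠ 1) :
    0 < (p - 1) * (x ^ p - 1 - p * (x - 1)) := by
  have hs : -1 ≤ x - 1 := by linarith
  have hs0 : x - 1 ≠ 0 := sub_ne_zero.mpr hx1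
  rcases hp1.lt_or_gt with hlt | hgt
  · have h := rpow_one_add_lt_one_add_mul_self hs hs0 hp hlt
    rw [add_sub_cancel] at h
    exact mul_pos_of_neg_of_neg (by linarith) (by linarith)
  · have h := one_add_mul_self_lt_rpow_one_add hs hs0 hgt
    rw [add_sub_cancel] at h
    exact mul_pos (by linarith) (by linarith)

lemma sub_one_mul_bernoulli_gap_nonneg (hx : 0 ≤ x) (hp : 0 < p) :
    0 ≤ (p - 1) * (x ^ p - 1 - p * (x - 1)) := by
  rcases eq_or_ne p 1 with rfl | hp1
  · simp
  rcases eq_or_ne x 1 with rfl | hx1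
  · simp
  exact (sub_one_mul_bernoulli_gap_pos hx hp hp1 hx1).le

end Bernoulli

section RenyiDivergence

variable {ι : Type*} [Fintype ι] {w v : ι → ℝ} {p : ℝ}

/-- The Rényi divergence of order `p` of the distribution `i ↦ w i * v i` from `w`, written
through the weights `w` and the likelihood ratio `v`, so that no `0 ^ (1 - p)` appears. -/
noncomputable def renyiDivergence (p : ℝ) (w v : ι → ℝ) : ℝ :=
  (p - 1)⁻¹ * Real.log (∑ i, w i * v i ^ p)

lemma sum_mul_bernoulli_gap (hw1 : ∑ i, w i = 1) (hwv : ∑ i, w i * v i = 1) :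
    ∑ i, w i * (v i ^ p - 1 - p * (v i - 1)) = ∑ i, w i * v i ^ p - 1 := by
  have expand (i : ι) : w i * (v i ^ p - 1 - p * (v i - 1))
      = w i * v i ^ p - w i - p * (w i * v i - w i) := by ring
  simp only [expand, Finset.sum_sub_distrib, ← Finset.mul_sum, hw1, hwv]
  ring

lemma sub_one_mul_sum_mul_rpow_sub_one_nonneg (hw : ∀ i, 0 ≤ w i) (hv : ∀ i, 0 ≤ v i)
    (hw1 : ∑ i, w i = 1) (hwv : ∑ i, w i * v i = 1) (hp : 0 < p) :
    0 ≤ (p - 1) * (∑ i, w i * v i ^ p - 1) := by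
  rw [← sum_mul_bernoulli_gap hw1 hwv, Finset.mul_sum]
  refine Finset.sum_nonneg fun i _ => ?_
  rw [mul_left_comm]
  exact mul_nonneg (hw i) (sub_one_mul_bernoulli_gap_nonneg (hv i) hp)

lemma sum_mul_rpow_pos (hw : ∀ i, 0 ≤ w i) (hv : ∀ i, 0 ≤ v i) (hwv : ∑ i, w i * v i = 1) :
    0 < ∑ i, w i * v i ^ p := by
  obtain ⟨i, -, hi⟩ := Finset.exists_ne_zero_of_sum_ne_zero (hwv.trans_ne one_ne_zero)
  have hwi : 0 < w i := (hw i).lt_of_ne (left_ne_zero_of_mul hi).symm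
  have hvi : 0 < v i := (hv i).lt_of_ne (right_ne_zero_of_mul hi).symm
  exact Finset.sum_pos' (fun j _ => mul_nonneg (hw j) (Real.rpow_nonneg (hv j) p))
    ⟨i, Finset.mem_univ i, mul_pos hwi (Real.rpow_pos_of_pos hvi p)⟩

lemma sum_mul_rpow_eq_one_iff (hw : ∀ i, 0 ≤ w i) (hv : ∀ i, 0 ≤ v i)
    (hw1 : ∑ i, w i = 1) (hwv : ∑ i, w i * v i = 1) (hp : 0 < p) (hp1 : p ≠ 1) :
    ∑ i, w i * v i ^ p = 1 ↔ ∀ i, w i ≠ 0 → v i = 1 := by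
  constructor
  · intro h i hwi
    by_contra hvi
    have hterm (j : ι) : 0 ≤ (p - 1) * (w j * (v j ^ p - 1 - p * (v j - 1))) := by
      rw [mul_left_comm]
      exact mul_nonneg (hw j) (sub_one_mul_bernoulli_gap_nonneg (hv j) hp)
    have hsum : ∑ j, (p - 1) * (w j * (v j ^ p - 1 - p * (v j - 1))) = 0 := by
      rw [← Finset.mul_sum, sum_mul_bernoulli_gap hw1 hwv, h, sub_self, mul_zero]
    have hi := (Finset.sum_eq_zero_iff_of_nonneg fun j _ => hterm j).mp hsum i (Finset.mem_univ i)
    rw [mul_left_comm] at hi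
    exact (mul_pos ((hw i).lt_of_ne (Ne.symm hwi))
      (sub_one_mul_bernoulli_gap_pos (hv i) hp hp1 hvi)).ne' hi
  · intro h
    rw [← hw1]
    refine Finset.sum_congr rfl fun i _ => ?_
    rcases eq_or_ne (w i) 0 with hwi | hwi
    · rw [hwi, zero_mul]
    · rw [h i hwi, Real.one_rpow, mul_one]

lemma renyiDivergence_nonneg (hw : ∀ i, 0 ≤ w i) (hv : ∀ i, 0 ≤ v i)
    (hw1 : ∑ i, w i = 1) (hwv : ∑ i, w i * v i = 1) (hp : 0 < p) :
    0 ≤ renyiDivergence p w v := by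
  have hpos := sum_mul_rpow_pos (p := p) hw hv hwv
  have hgap := sub_one_mul_sum_mul_rpow_sub_one_nonneg hw hv hw1 hwv hp
  rcases lt_or_ge p 1 with hlt | hge
  · have hle : ∑ i, w i * v i ^ p ≤ 1 :=
      sub_nonpos.mp (nonpos_of_mul_nonneg_right hgap (by linarith))
    exact mul_nonneg_of_nonpos_of_nonpos (inv_nonpos.mpr (by linarith))
      ((Real.log_nonpos_iff hpos.le).mpr hle)
  · rcases hge.eq_or_lt with rfl | hgt
    · simp [renyiDivergence]
    have hle : 1 ≤ ∑ i, w i * v i ^ p :=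
      sub_nonneg.mp (nonneg_of_mul_nonneg_right hgap (by linarith))
    exact mul_nonneg (inv_nonneg.mpr (by linarith)) ((Real.log_nonneg_iff hpos).mpr hle)

lemma renyiDivergence_eq_zero_iff (hw : ∀ i, 0 ≤ w i) (hv : ∀ i, 0 ≤ v i)
    (hw1 : ∑ i, w i = 1) (hwv : ∑ i, w i * v i = 1) (hp : 0 < p) (hp1 : p ≠ 1) :
    renyiDivergence p w v = 0 ↔ ∀ i, w i ≠ 0 → v i = 1 := by
  have hpos := sum_mul_rpow_pos (p := p) hw hv hwv
  rw [← sum_mul_rpow_eq_one_iff hw hv hw1 hwv hp hp1, renyiDivergence,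
    mul_eq_zero, inv_eq_zero, sub_eq_zero, Real.log_eq_zero]
  constructor
  · rintro (h | h | h | h)
    · exact absurd h hp1
    · exact absurd h hpos.ne'
    · exact h
    · linarith
  · intro h
    exact Or.inr (Or.inr (Or.inl h))

end RenyiDivergence

section UnitaryConj

variable {m : Type*} [Fintype m] [DecidableEq m] {U V : Matrix m m ℂ}

lemma unitary_conj_diagonal_mul (hV : V ∈ unitaryGroup m ℂ) (d e : m → ℂ) :
    V * diagonal d * star V * (V * diagonal e * star V) =
      V * diagonal (fun i => d i * e i) * star V := by
  calc V * diagonal d * star V * (V * diagonal e * star V)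
      = V * diagonal d * (star V * V) * diagonal e * star V := by simp only [Matrix.mul_assoc]
    _ = _ := by
      rw [Unitary.star_mul_self_of_mem hV, Matrix.mul_one, Matrix.mul_assoc V,
        diagonal_mul_diagonal]

lemma trace_unitary_conj_diagonal (hV : V ∈ unitaryGroup m ℂ) (d : m → ℂ) :
    (V * diagonal d * star V).trace = ∑ i, d i := by
  rw [trace_mul_cycle, Unitary.star_mul_self_of_mem hV, Matrix.one_mul, trace_diagonal]

lemma sum_normSq_row_of_mem_unitaryGroup (hU : U ∈ unitaryGroup m ℂ) (i : m) :
    ∑ j, Complex.normSq (U i j) = 1 := by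
  have h := congrFun (congrFun (mem_unitaryGroup_iff.mp hU) i) i
  simp only [mul_apply, one_apply_eq, star_apply, Complex.star_def, Complex.mul_conj] at h
  exact_mod_cast h

lemma sum_normSq_col_of_mem_unitaryGroup (hU : U ∈ unitaryGroup m ℂ) (j : m) :
    ∑ i, Complex.normSq (U i j) = 1 := by
  have hU' : star U ∈ unitaryGroup m ℂ := Unitary.star_mem hU
  simpa only [star_apply, Complex.star_def, Complex.normSq_conj] using
    sum_normSq_row_of_mem_unitaryGroup hU' j

lemma trace_unitary_conj_diagonal_mul (hU : U ∈ unitaryGroup m ℂ) (d e : m → ℂ) :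
    (U * diagonal d * star U * (V * diagonal e * star V)).trace
      = ∑ i, ∑ j, d i * e j * Complex.normSq ((star U * V) i j) := by
  have h : U * diagonal d * star U * (V * diagonal e * star V)
      = U * (diagonal d * (star U * V) * diagonal e * star (star U * V)) * star U := by
    simp only [star_mul, star_star, Matrix.mul_assoc, Unitary.mul_star_self_of_mem hU,
      Matrix.mul_one]
  rw [h, trace_mul_cycle, Unitary.star_mul_self_of_mem hU, Matrix.one_mul]
  generalize star U * V = W
  refine Finset.sum_congr rfl fun i _ => ?_
  rw [diag_apply, mul_apply]
  refine Finset.sum_congr rfl fun j _ => ?_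
  rw [mul_diagonal, diagonal_mul, star_apply, Complex.star_def, Complex.normSq_eq_conj_mul_self]
  ring

lemma unitary_conj_diagonal_eq_iff (hU : U ∈ unitaryGroup m ℂ) (hV : V ∈ unitaryGroup m ℂ)
    (d e : m → ℂ) :
    U * diagonal d * star U = V * diagonal e * star V ↔
      ∀ i j, d i * (star U * V) i j = (star U * V) i j * e j := by
  have hconj : Function.LeftInverse (fun X => U * X * star V) (fun X => star U * X * V) := by
    intro X
    simp only [← Matrix.mul_assoc, Unitary.mul_star_self_of_mem hU, Matrix.one_mul]
    rw [Matrix.mul_assoc X, Unitary.mul_star_self_of_mem hV, Matrix.mul_one]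
  rw [← hconj.injective.eq_iff]
  simp only [← Matrix.mul_assoc, Unitary.star_mul_self_of_mem hU, Matrix.one_mul]
  rw [Matrix.mul_assoc _ (star V), Unitary.star_mul_self_of_mem hV, Matrix.mul_one,
    ← Matrix.ext_iff]
  simp only [Matrix.mul_assoc (diagonal d), diagonal_mul, mul_diagonal]

end UnitaryConj

section Mpow

variable {m : Type*} [Fintype m] [DecidableEq m] {A σ : Matrix m m ℂ}

lemma mpow_of_isHermitian (hA : A.IsHermitian) (r : ℝ) :
    mpow A r = hA.eigenvectorUnitary * diagonal (fun i => ((hA.eigenvalues i ^ r : ℝ) : ℂ)) *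
      star (hA.eigenvectorUnitary : Matrix m m ℂ) :=
  dif_pos hA

lemma isHermitian_mpow (hA : A.IsHermitian) (r : ℝ) : (mpow A r).IsHermitian := by
  rw [mpow_of_isHermitian hA, star_eq_conjTranspose]
  exact isHermitian_mul_mul_conjTranspose _
    (isHermitian_diagonal_of_self_adjoint _ (funext fun i => Complex.conj_ofReal _))

lemma mpow_one (hA : A.IsHermitian) : mpow A 1 = A := by
  simp only [mpow_of_isHermitian hA, Real.rpow_one]
  exact hA.spectral_theorem.symm

lemma mpow_mul_mpow (hσ : σ.PosDef) (r t : ℝ) : mpow σ r * mpow σ t = mpow σ (r + t) := by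
  simp only [mpow_of_isHermitian hσ.1, unitary_conj_diagonal_mul (SetLike.coe_mem _),
    ← Complex.ofReal_mul, ← Real.rpow_add (hσ.eigenvalues_pos _)]

lemma mpow_zero (hA : A.IsHermitian) : mpow A 0 = 1 := by
  simp only [mpow_of_isHermitian hA, Real.rpow_zero, Complex.ofReal_one, diagonal_one,
    Matrix.mul_one]
  exact mem_unitaryGroup_iff.mp (SetLike.coe_mem _)

lemma mpow_mul_mul_mpow_inj (hσ : σ.PosDef) (a : ℝ) {X Y : Matrix m m ℂ} :
    mpow σ a * X * mpow σ a = mpow σ a * Y * mpow σ a ↔ X = Y := by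
  have hinv : Function.LeftInverse (fun Z => mpow σ (-a) * Z * mpow σ (-a))
      (fun Z => mpow σ a * Z * mpow σ a) := by
    intro Z
    simp only [← Matrix.mul_assoc, mpow_mul_mpow hσ, neg_add_cancel, mpow_zero hσ.1,
      Matrix.one_mul]
    rw [Matrix.mul_assoc Z, mpow_mul_mpow hσ, add_neg_cancel, mpow_zero hσ.1, Matrix.mul_one]
  exact hinv.injective.eq_iff

lemma trace_mpow_mul_mul_mpow_mul_mpow (hσ : σ.PosDef) (a : ℝ) (X : Matrix m m ℂ) :
    (mpow σ a * X * mpow σ a * mpow σ (-a + -a)).trace = X.trace := by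
  rw [trace_mul_comm, ← Matrix.mul_assoc, ← Matrix.mul_assoc, mpow_mul_mpow hσ, trace_mul_cycle,
    mpow_mul_mpow hσ, show a + (-a + -a + a) = 0 by ring, mpow_zero hσ.1, Matrix.one_mul]

end Mpow

section EigenOverlap

variable {m : Type*} [Fintype m] [DecidableEq m] {A B : Matrix m m ℂ}

noncomputable def eigenOverlap (hA : A.IsHermitian) (hB : B.IsHermitian) (k : m × m) : ℝ :=
  Complex.normSq ((star (hA.eigenvectorUnitary : Matrix m m ℂ) * hB.eigenvectorUnitary) k.1 k.2)

lemma star_eigenvectorUnitary_mul_mem (hA : A.IsHermitian) (hB : B.IsHermitian) :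
    star (hA.eigenvectorUnitary : Matrix m m ℂ) * hB.eigenvectorUnitary ∈ unitaryGroup m ℂ :=
  Submonoid.mul_mem _ (Unitary.star_mem (SetLike.coe_mem _)) (SetLike.coe_mem _)

lemma sum_eigenOverlap_mul_fst (hA : A.IsHermitian) (hB : B.IsHermitian) (f : m → ℝ) :
    ∑ k, eigenOverlap hA hB k * f k.1 = ∑ i, f i := by
  rw [Fintype.sum_prod_type]
  refine Finset.sum_congr rfl fun i _ => ?_
  simp only [eigenOverlap]
  rw [← Finset.sum_mul, sum_normSq_row_of_mem_unitaryGroup (star_eigenvectorUnitary_mul_mem hA hB),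
    one_mul]

lemma sum_eigenOverlap_mul_snd (hA : A.IsHermitian) (hB : B.IsHermitian) (f : m → ℝ) :
    ∑ k, eigenOverlap hA hB k * f k.2 = ∑ j, f j := by
  rw [Fintype.sum_prod_type, Finset.sum_comm]
  refine Finset.sum_congr rfl fun j _ => ?_
  simp only [eigenOverlap]
  rw [← Finset.sum_mul, sum_normSq_col_of_mem_unitaryGroup (star_eigenvectorUnitary_mul_mem hA hB),
    one_mul]

lemma trace_mul_mpow (hA : A.IsHermitian) (hB : B.IsHermitian) (t : ℝ) :
    (A * mpow B t).trace =
      ∑ k, ((eigenOverlap hA hB k * hA.eigenvalues k.1 * hB.eigenvalues k.2 ^ t : ℝ) : ℂ) := by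
  conv_lhs => rw [hA.spectral_theorem, mpow_of_isHermitian hB]
  rw [Unitary.conjStarAlgAut_apply, trace_unitary_conj_diagonal_mul (SetLike.coe_mem _),
    Fintype.sum_prod_type]
  push_cast
  simp only [eigenOverlap, Function.comp_apply, RCLike.ofReal_eq_complex_ofReal]
  exact Finset.sum_congr rfl fun i _ => Finset.sum_congr rfl fun j _ => by ring

lemma trace_mpow (hA : A.IsHermitian) (r : ℝ) :
    (mpow A r).trace = ∑ i, ((hA.eigenvalues i ^ r : ℝ) : ℂ) := by
  rw [mpow_of_isHermitian hA, trace_unitary_conj_diagonal (SetLike.coe_mem _)]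

lemma eq_mpow_iff (hA : A.IsHermitian) (hB : B.IsHermitian) (t : ℝ) :
    A = mpow B t ↔ ∀ k, eigenOverlap hA hB k ≠ 0 → hA.eigenvalues k.1 = hB.eigenvalues k.2 ^ t := by
  conv_lhs => rw [hA.spectral_theorem, mpow_of_isHermitian hB]
  rw [Unitary.conjStarAlgAut_apply,
    unitary_conj_diagonal_eq_iff (SetLike.coe_mem _) (SetLike.coe_mem _), Prod.forall]
  refine forall₂_congr fun i j => ?_
  simp only [eigenOverlap, ne_eq, Complex.normSq_eq_zero, Function.comp_apply,
    RCLike.ofReal_eq_complex_ofReal]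
  rw [mul_comm, mul_eq_mul_left_iff, Complex.ofReal_inj, or_comm, or_iff_not_imp_left]

end EigenOverlap

section SpectralWeights

variable {m : Type*} [Fintype m] [DecidableEq m] {A σ : Matrix m m ℂ}

lemma exists_spectral_weights (hA : A.PosSemidef) (hσ : σ.PosDef) {n : ℝ} (hn : n ≠ 0) :
    ∃ w v : m × m → ℝ, (∀ k, 0 ≤ w k) ∧ (∀ k, 0 ≤ v k) ∧
      ∑ k, w k = σ.trace.re ∧ ∑ k, w k * v k = (A * mpow σ ((n - 1) / n)).trace.re ∧
      ∑ k, w k * v k ^ n = (mpow A n).trace.re ∧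
      ((∀ k, w k ≠ 0 → v k = 1) ↔ A = mpow σ (1 / n)) := by
  have hs (j : m) : 0 < hσ.1.eigenvalues j := hσ.eigenvalues_pos j
  refine ⟨fun k => eigenOverlap hA.1 hσ.1 k * hσ.1.eigenvalues k.2,
    fun k => hA.1.eigenvalues k.1 / hσ.1.eigenvalues k.2 ^ (1 / n),
    fun k => mul_nonneg (Complex.normSq_nonneg _) (hs _).le,
    fun k => div_nonneg (hA.eigenvalues_nonneg _) (Real.rpow_nonneg (hs _).le _), ?_, ?_, ?_, ?_⟩
  · rw [sum_eigenOverlap_mul_snd, hσ.1.trace_eq_sum_eigenvalues, Complex.re_sum]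
    simp only [RCLike.ofReal_eq_complex_ofReal, Complex.ofReal_re]
  · rw [trace_mul_mpow hA.1 hσ.1, ← Complex.ofReal_sum, Complex.ofReal_re]
    refine Finset.sum_congr rfl fun k _ => ?_
    have hsk : hσ.1.eigenvalues k.2 / hσ.1.eigenvalues k.2 ^ (1 / n)
        = hσ.1.eigenvalues k.2 ^ ((n - 1) / n) := by
      rw [show (n - 1) / n = 1 - 1 / n by field_simp, Real.rpow_sub (hs _), Real.rpow_one]
    rw [← hsk]
    ring
  · rw [trace_mpow hA.1, ← Complex.ofReal_sum, Complex.ofReal_re,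
      ← sum_eigenOverlap_mul_fst hA.1 hσ.1]
    refine Finset.sum_congr rfl fun k _ => ?_
    rw [Real.div_rpow (hA.eigenvalues_nonneg _) (Real.rpow_nonneg (hs _).le _),
      ← Real.rpow_mul (hs _).le, one_div_mul_cancel hn, Real.rpow_one]
    field_simp [(hs k.2).ne']
  · rw [eq_mpow_iff hA.1 hσ.1]
    refine forall_congr' fun k => ?_
    rw [div_eq_one_iff_eq (Real.rpow_pos_of_pos (hs _) _).ne', mul_ne_zero_iff,
      and_iff_left (hs _).ne']

end SpectralWeights

/-- nonnegativity and faithfulness of the sandwiched Rényi relative entropy. -/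
theorem srenyi_nonneg_and_faithful {m : Type*} [Fintype m] [DecidableEq m]
    (ρ σ : Matrix m m ℂ) (hρ : IsDensity ρ) (hσ : IsDensity σ) (hσpd : σ.PosDef)
    (n : ℝ) (hn : 0 < n) (hn1 : n ≠ 1) :
    0 ≤ SRenyi n ρ σ ∧ (SRenyi n ρ σ = 0 ↔ ρ = σ) := by
  set a := (1 - n) / (2 * n) with ha
  have hA : (mpow σ a * ρ * mpow σ a).PosSemidef := by
    simpa only [(isHermitian_mpow hσpd.1 a).eq] using hρ.1.mul_mul_conjTranspose_same (mpow σ a)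
  have htrace : (mpow σ a * ρ * mpow σ a * mpow σ ((n - 1) / n)).trace = 1 := by
    rw [show (n - 1) / n = -a + -a by rw [ha]; field_simp; ring,
      trace_mpow_mul_mul_mpow_mul_mpow hσpd, hρ.2]
  have hfaith : mpow σ a * ρ * mpow σ a = mpow σ (1 / n) ↔ ρ = σ := by
    rw [show 1 / n = a + 1 + a by rw [ha]; field_simp; ring, ← mpow_mul_mpow hσpd,
      ← mpow_mul_mpow hσpd, mpow_one hσpd.1, mpow_mul_mul_mpow_inj hσpd]
  obtain ⟨w, v, hw, hv, hw1, hwv, hwvn, hsupp⟩ := exists_spectral_weights hA hσpd hn.ne'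
  rw [hσ.2, Complex.one_re] at hw1
  rw [htrace, Complex.one_re] at hwv
  have hS : SRenyi n ρ σ = renyiDivergence n w v := by rw [SRenyi, renyiDivergence, hwvn]
  rw [hS, renyiDivergence_eq_zero_iff hw hv hw1 hwv hn hn1, hsupp, hfaith]
  exact ⟨renyiDivergence_nonneg hw hv hw1 hwv hn, Iff.rfl⟩
end

section
/- The von Neumann entropy of the encoded state satisfies the Ryu–Takayanagi-type formula: in the block setup, for ρ̃ = ⊕_α p_α ρ_{a_α} ⊗ χ_α, one has S(ρ̃) = Σ_α p_α S(χ_α) + Σ_α p_α S(ρ_{a_α}) − Σ_α p_α log p_α, where S(τ) = −Tr(τ log τ) denotes the von Neumann entropy. (The first term is Tr(ρ̃ L) for the area operator L = ⊕_α S(χ_α)·I, and the remaining terms form the algebraic entropy S(ρ_a : M).) -/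
open Matrix
open scoped Kronecker ComplexOrder

/-! Each block diagonalises: if `ρ_α = U_α Λ_α U_α*` and `χ_α = W_α M_α W_α*`, then `ρ̃` is
conjugate, by the unitary `⊕_α U_α ⊗ W_α`, to the diagonal matrix with entries
`p_α λ_{α,i} μ_{α,j}`. Equal characteristic polynomials make these entries the eigenvalues of `ρ̃`
with multiplicity, so `S(ρ̃) = Σ η(p_α λ_{α,i} μ_{α,j})` with `η(x) = -x log x`. The identity
`η(xy) = y η(x) + x η(y)` and `Σ_i λ_{α,i} = Σ_j μ_{α,j} = 1` split this sum into the three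
terms. -/

open Polynomial

section Hermitian

variable {m : Type*} [Fintype m] [DecidableEq m] {A : Matrix m m ℂ}

theorem Matrix.IsHermitian.mlog_eq_cfc (hA : A.IsHermitian) : mlog A = cfc Real.log A := by
  rw [mlog, dif_pos hA, hA.cfc_eq, IsHermitian.cfc, Unitary.conjStarAlgAut_apply]
  rfl

theorem Matrix.IsHermitian.trace_cfc (hA : A.IsHermitian) (f : ℝ → ℝ) :
    (cfc f A).trace = ∑ i, (f (hA.eigenvalues i) : ℂ) := by
  rw [hA.cfc_eq, IsHermitian.cfc, Unitary.conjStarAlgAut_apply, trace_mul_cycle,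
    Unitary.coe_star_mul_self, one_mul, trace_diagonal]
  rfl

theorem Matrix.IsHermitian.vnEnt_eq (hA : A.IsHermitian) :
    vnEnt A = ∑ i, Real.negMulLog (hA.eigenvalues i) := by
  have hmul : A * cfc Real.log A = cfc (fun x => x * Real.log x) A := by
    rw [cfc_mul (fun x => x) Real.log A (by fun_prop) (A.finite_real_spectrum.continuousOn _),
      cfc_id' ℝ A hA.isSelfAdjoint]
  rw [vnEnt, hA.mlog_eq_cfc, hmul, hA.trace_cfc]
  simp [Real.negMulLog, ← Finset.sum_neg_distrib]

end Hermitian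

def IsUnitaryConjDiagonal {m : Type*} [Fintype m] [DecidableEq m] (A : Matrix m m ℂ) (d : m → ℝ) :
    Prop :=
  ∃ U ∈ unitaryGroup m ℂ, A = U * diagonal (fun i => (d i : ℂ)) * star U

namespace IsUnitaryConjDiagonal

variable {m n : Type*} [Fintype m] [DecidableEq m] [Fintype n] [DecidableEq n]
  {A : Matrix m m ℂ} {B : Matrix n n ℂ} {d : m → ℝ} {e : n → ℝ}

theorem _root_.Matrix.IsHermitian.isUnitaryConjDiagonal (hA : A.IsHermitian) :
    IsUnitaryConjDiagonal A hA.eigenvalues :=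
  ⟨hA.eigenvectorUnitary, hA.eigenvectorUnitary.2, hA.spectral_theorem⟩

theorem smul (h : IsUnitaryConjDiagonal A d) (r : ℝ) :
    IsUnitaryConjDiagonal ((r : ℂ) • A) (r • d) := by
  obtain ⟨U, hU, rfl⟩ := h
  refine ⟨U, hU, ?_⟩
  have hdiag : diagonal (fun i => ((r • d) i : ℂ)) = (r : ℂ) • diagonal fun i => (d i : ℂ) := by
    ext i j
    by_cases hij : i = j <;> simp [hij]
  rw [hdiag, Matrix.mul_smul, Matrix.smul_mul]

theorem kronecker (hA : IsUnitaryConjDiagonal A d) (hB : IsUnitaryConjDiagonal B e) :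
    IsUnitaryConjDiagonal (A ⊗ₖ B) (fun ij => d ij.1 * e ij.2) := by
  obtain ⟨U, hU, rfl⟩ := hA
  obtain ⟨V, hV, rfl⟩ := hB
  refine ⟨U ⊗ₖ V, kronecker_mem_unitary hU hV, ?_⟩
  simp only [star_eq_conjTranspose, conjTranspose_kronecker, mul_kronecker_mul,
    diagonal_kronecker_diagonal, Complex.ofReal_mul]

theorem blockDiagonal' {ι : Type*} [Fintype ι] [DecidableEq ι] {m : ι → Type*}
    [∀ i, Fintype (m i)] [∀ i, DecidableEq (m i)] {A : ∀ i, Matrix (m i) (m i) ℂ}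
    {d : ∀ i, m i → ℝ} (h : ∀ i, IsUnitaryConjDiagonal (A i) (d i)) :
    IsUnitaryConjDiagonal (blockDiagonal' A) (fun x => d x.1 x.2) := by
  choose U hU hA using h
  have hstar : star (Matrix.blockDiagonal' U) = Matrix.blockDiagonal' fun i => star (U i) :=
    blockDiagonal'_conjTranspose U
  refine ⟨Matrix.blockDiagonal' U, ?_, ?_⟩
  · rw [mem_unitaryGroup_iff, hstar, ← blockDiagonal'_mul]
    simp_rw [fun i => mem_unitaryGroup_iff.mp (hU i)]
    exact blockDiagonal'_one
  · rw [hstar, ← blockDiagonal'_diagonal (fun i j => (d i j : ℂ)), ← blockDiagonal'_mul,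
      ← blockDiagonal'_mul]
    exact congrArg Matrix.blockDiagonal' (funext hA)

theorem trace_eq (h : IsUnitaryConjDiagonal A d) : A.trace = ∑ i, (d i : ℂ) := by
  obtain ⟨U, hU, rfl⟩ := h
  rw [trace_mul_cycle, mem_unitaryGroup_iff'.mp hU, one_mul, trace_diagonal]

theorem charpoly_eq (h : IsUnitaryConjDiagonal A d) :
    A.charpoly = ∏ i, (X - C (d i : ℂ)) := by
  obtain ⟨U, hU, rfl⟩ := h
  rw [charpoly_mul_comm, ← mul_assoc, mem_unitaryGroup_iff'.mp hU, one_mul, charpoly_diagonal]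

theorem map_eigenvalues (h : IsUnitaryConjDiagonal A d) (hA : A.IsHermitian) :
    Finset.univ.val.map hA.eigenvalues = Finset.univ.val.map d := by
  refine Multiset.map_injective Complex.ofReal_injective ?_
  rw [Multiset.map_map, Multiset.map_map]
  refine hA.roots_charpoly_eq_eigenvalues.symm.trans ?_
  rw [h.charpoly_eq, roots_prod _ _ (Finset.prod_ne_zero_iff.mpr fun i _ => X_sub_C_ne_zero _)]
  simp

theorem isHermitian (h : IsUnitaryConjDiagonal A d) : A.IsHermitian := by
  obtain ⟨U, -, rfl⟩ := h
  exact isHermitian_mul_mul_conjTranspose U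
    (isHermitian_diagonal_iff.mpr fun i => Complex.conj_ofReal (d i))

theorem vnEnt_eq (h : IsUnitaryConjDiagonal A d) : vnEnt A = ∑ i, Real.negMulLog (d i) := by
  have hA := h.isHermitian
  have := congrArg (fun s => (s.map Real.negMulLog).sum) (h.map_eigenvalues hA)
  simpa only [hA.vnEnt_eq, Multiset.map_map, Function.comp_def, ← Finset.sum_eq_multiset_sum]
    using this

theorem sum_eq_one (h : IsUnitaryConjDiagonal A d) (hA : IsDensity A) : ∑ i, d i = 1 := by
  exact_mod_cast h.trace_eq.symm.trans hA.2

end IsUnitaryConjDiagonal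

section negMulLog

open Real

variable {m n : Type*} [Fintype m] [Fintype n]

theorem sum_negMulLog_const_mul {x : m → ℝ} (c : ℝ) (hx : ∑ i, x i = 1) :
    ∑ i, negMulLog (c * x i) = negMulLog c + c * ∑ i, negMulLog (x i) := by
  simp_rw [negMulLog_mul, Finset.sum_add_distrib, ← Finset.sum_mul, ← Finset.mul_sum, hx, one_mul]

theorem sum_negMulLog_mul_prod {a : m → ℝ} {b : n → ℝ} (ha : ∑ i, a i = 1) (hb : ∑ j, b j = 1) :
    ∑ ij : m × n, negMulLog (a ij.1 * b ij.2) = ∑ i, negMulLog (a i) + ∑ j, negMulLog (b j) := by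
  simp only [Fintype.sum_prod_type, negMulLog_mul, Finset.sum_add_distrib, ← Finset.mul_sum,
    ← Finset.sum_mul, hb, ha, one_mul]

end negMulLog

theorem vnEnt_smul_kronecker {m n : Type*} [Fintype m] [DecidableEq m] [Fintype n]
    [DecidableEq n] {ρ : Matrix m m ℂ} {χ : Matrix n n ℂ} (hρ : IsDensity ρ) (hχ : IsDensity χ)
    (c : ℝ) :
    vnEnt ((c : ℂ) • (ρ ⊗ₖ χ)) = Real.negMulLog c + c * (vnEnt ρ + vnEnt χ) := by
  have ha := hρ.1.isHermitian.isUnitaryConjDiagonal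
  have hb := hχ.1.isHermitian.isUnitaryConjDiagonal
  have ha1 := ha.sum_eq_one hρ
  have hb1 := hb.sum_eq_one hχ
  have hab1 :
      ∑ ij : m × n, hρ.1.isHermitian.eigenvalues ij.1 * hχ.1.isHermitian.eigenvalues ij.2 = 1 := by
    rw [Fintype.sum_prod_type, ← Fintype.sum_mul_sum, ha1, hb1, one_mul]
  rw [((ha.kronecker hb).smul c).vnEnt_eq]
  simp only [Pi.smul_apply, smul_eq_mul]
  rw [sum_negMulLog_const_mul c hab1, sum_negMulLog_mul_prod ha1 hb1, ha.vnEnt_eq, hb.vnEnt_eq]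

theorem vnEnt_blockDiagonal' {ι : Type*} [Fintype ι] [DecidableEq ι] {m : ι → Type*}
    [∀ i, Fintype (m i)] [∀ i, DecidableEq (m i)] {A : ∀ i, Matrix (m i) (m i) ℂ}
    (hA : ∀ i, (A i).IsHermitian) :
    vnEnt (blockDiagonal' A) = ∑ i, vnEnt (A i) := by
  rw [(IsUnitaryConjDiagonal.blockDiagonal' fun i => (hA i).isUnitaryConjDiagonal).vnEnt_eq,
    Fintype.sum_sigma]
  exact Finset.sum_congr rfl fun i _ => ((hA i).isUnitaryConjDiagonal.vnEnt_eq).symm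

theorem vnEnt_block_encoded_general {ι : Type*} [Fintype ι] [DecidableEq ι] (da db : ι → ℕ)
    (p : ι → ℝ)
    (ρ : ∀ α, Matrix (Fin (da α)) (Fin (da α)) ℂ) (hρ : ∀ α, IsDensity (ρ α))
    (χ : ∀ α, Matrix (Fin (db α)) (Fin (db α)) ℂ) (hχ : ∀ α, IsDensity (χ α)) :
    vnEnt (Matrix.blockDiagonal' (fun α => ((p α : ℂ) • (ρ α ⊗ₖ χ α)))) =
      ∑ α, p α * vnEnt (χ α) + ∑ α, p α * vnEnt (ρ α) - ∑ α, p α * Real.log (p α) := by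
  rw [vnEnt_blockDiagonal' fun α =>
    ((hρ α).1.kronecker (hχ α).1).isHermitian.smul (Complex.conj_ofReal (p α))]
  simp only [vnEnt_smul_kronecker (hρ _) (hχ _), Real.negMulLog, neg_mul, Finset.sum_add_distrib,
    Finset.sum_neg_distrib, mul_add]
  ring

/-- the Ryu–Takayanagi-type formula for the von Neumann entropy of the
block-diagonal encoded state `ρ̃ = ⊕_α p_α ρ_{a_α} ⊗ χ_α`. -/
theorem vnEnt_block_encoded {ι : Type*} [Fintype ι] [DecidableEq ι] (da db : ι → ℕ)
    (p : ι → ℝ) (hp : ∀ α, 0 < p α) (hp1 : ∑ α, p α = 1)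
    (ρ : ∀ α, Matrix (Fin (da α)) (Fin (da α)) ℂ) (hρ : ∀ α, IsDensity (ρ α))
    (χ : ∀ α, Matrix (Fin (db α)) (Fin (db α)) ℂ) (hχ : ∀ α, IsDensity (χ α))
    (hχpd : ∀ α, (χ α).PosDef) :
    vnEnt (Matrix.blockDiagonal' (fun α => ((p α : ℂ) • (ρ α ⊗ₖ χ α)))) =
      ∑ α, p α * vnEnt (χ α) + ∑ α, p α * vnEnt (ρ α) - ∑ α, p α * Real.log (p α) :=
  vnEnt_block_encoded_general da db p ρ hρ χ hχ
end

section
/- Equality of bulk and boundary relative entropy for algebraic encodings: in the block setup, with encoded states ρ̃_A = U(⊕_α p_α ρ_{a_α} ⊗ χ_α)U† and σ̃_A = U(⊕_α q_α σ_{a_α} ⊗ χ_α)U† for a unitary U, the relative entropy satisfies S(ρ̃_A ‖ σ̃_A) = Σ_α p_α log(p_α/q_α) + Σ_α p_α S(ρ_{a_α} ‖ σ_{a_α}). -/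
open Matrix
open scoped Kronecker ComplexOrder

/-!
Everything reduces to computing matrix logarithms. For any unitary `W` and real `d`,
`mlog (W * diagonal d * star W) = W * diagonal (log ∘ d) * star W`, whichever unitary
diagonalization `mlog` happens to choose: both sides equal `g (W * diagonal d * star W)` for a real
polynomial `g` interpolating `Real.log` on the eigenvalues of the two diagonalizations. Hence `mlog`
commutes with unitary conjugation and with block sums, and on positive definite matrices
`mlog (c • A) = log c • 1 + mlog A` and `mlog (A ⊗ B) = mlog A ⊗ 1 + 1 ⊗ mlog B`.

So relative entropy is invariant under unitary conjugation, is additive over blocks and over tensor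
factors of unit trace, and `S(p ρ ‖ q σ) = p log (p / q) + p S(ρ ‖ σ)` when `Tr ρ = 1`. The shared
factor `χ_α` contributes `S(χ_α ‖ χ_α) = 0`.
-/

section MatrixLog

open Polynomial

variable {n m : Type*} [Fintype n] [DecidableEq n] [Fintype m] [DecidableEq m]

theorem aeval_unitary_conj_diagonal (W : unitaryGroup n ℂ) (d : n → ℝ) (g : ℝ[X]) :
    aeval ((W : Matrix n n ℂ) * diagonal (fun i => (d i : ℂ)) * star (W : Matrix n n ℂ)) g
      = W * diagonal (fun i => ((g.eval (d i) : ℝ) : ℂ)) * star (W : Matrix n n ℂ) := by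
  have hdiag : aeval (diagonal fun i => (d i : ℂ)) g
      = diagonal fun i => ((g.eval (d i) : ℝ) : ℂ) := by
    rw [← diagonalAlgHom_apply (R := ℝ), aeval_algHom_apply, diagonalAlgHom_apply]
    congr 1
    funext i
    rw [aeval_pi_apply₂, ← Complex.coe_algebraMap, aeval_algebraMap_apply, coe_aeval_eq_eval]
  rw [← Unitary.conjStarAlgAut_apply (S := ℝ), aeval_algHom_apply, hdiag,
    Unitary.conjStarAlgAut_apply]

theorem Matrix.IsHermitian.eq_eigenvectorUnitary_mul_diagonal {A : Matrix n n ℂ}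
    (hA : A.IsHermitian) :
    A = hA.eigenvectorUnitary * diagonal (fun i => (hA.eigenvalues i : ℂ)) *
      star (hA.eigenvectorUnitary : Matrix n n ℂ) := by
  conv_lhs => rw [hA.spectral_theorem]
  rfl

theorem mlog_of_isHermitian {A : Matrix n n ℂ} (hA : A.IsHermitian) :
    mlog A = hA.eigenvectorUnitary * diagonal (fun i => (Real.log (hA.eigenvalues i) : ℂ)) *
      star (hA.eigenvectorUnitary : Matrix n n ℂ) :=
  dif_pos hA

theorem mlog_unitary_conj_diagonal (W : unitaryGroup n ℂ) (d : n → ℝ) :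
    mlog ((W : Matrix n n ℂ) * diagonal (fun i => (d i : ℂ)) * star (W : Matrix n n ℂ))
      = W * diagonal (fun i => (Real.log (d i) : ℂ)) * star (W : Matrix n n ℂ) := by
  set A := (W : Matrix n n ℂ) * diagonal (fun i => (d i : ℂ)) * star (W : Matrix n n ℂ)
  have hA : A.IsHermitian := by
    simpa [A, star_eq_conjTranspose] using isHermitian_mul_mul_conjTranspose (W : Matrix n n ℂ)
      (isHermitian_diagonal_iff.2 fun i => Complex.conj_ofReal (d i))
  let s : Finset ℝ := Finset.univ.image d ∪ Finset.univ.image hA.eigenvalues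
  let g : ℝ[X] := Lagrange.interpolate s id Real.log
  have hg : ∀ x ∈ s, g.eval x = Real.log x := fun x hx =>
    Lagrange.eval_interpolate_at_node (v := id) _ Function.injective_id.injOn hx
  have hlog_d : (fun i => (Real.log (d i) : ℂ)) = fun i => ((g.eval (d i) : ℝ) : ℂ) := by
    funext i; rw [hg _ (by simp [s])]
  have hlog_e : (fun i => (Real.log (hA.eigenvalues i) : ℂ)) =
      fun i => ((g.eval (hA.eigenvalues i) : ℝ) : ℂ) := by
    funext i; rw [hg _ (by simp [s])]
  rw [mlog_of_isHermitian hA, hlog_d, hlog_e, ← aeval_unitary_conj_diagonal,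
    ← hA.eq_eigenvectorUnitary_mul_diagonal, aeval_unitary_conj_diagonal]

theorem mlog_unitary_conj (W : unitaryGroup n ℂ) {A : Matrix n n ℂ} (hA : A.IsHermitian) :
    mlog ((W : Matrix n n ℂ) * A * star (W : Matrix n n ℂ))
      = W * mlog A * star (W : Matrix n n ℂ) := by
  have hconj : ∀ d : n → ℝ, (W : Matrix n n ℂ) * (hA.eigenvectorUnitary *
        diagonal (fun i => (d i : ℂ)) * star (hA.eigenvectorUnitary : Matrix n n ℂ)) *
        star (W : Matrix n n ℂ)
      = ((W * hA.eigenvectorUnitary : unitaryGroup n ℂ) : Matrix n n ℂ) *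
        diagonal (fun i => (d i : ℂ)) *
        star ((W * hA.eigenvectorUnitary : unitaryGroup n ℂ) : Matrix n n ℂ) := fun d => by
    simp only [Submonoid.coe_mul, star_mul, Matrix.mul_assoc]
  conv_lhs => rw [hA.eq_eigenvectorUnitary_mul_diagonal]
  rw [hconj, mlog_unitary_conj_diagonal, mlog_of_isHermitian hA, hconj]

theorem mlog_smul {c : ℝ} (hc : 0 < c) {A : Matrix n n ℂ} (hA : A.PosDef) :
    mlog ((c : ℂ) • A) = (Real.log c : ℂ) • 1 + mlog A := by
  set V := hA.1.eigenvectorUnitary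
  have hcA : (c : ℂ) • A = V * diagonal (fun i => ((c * hA.1.eigenvalues i : ℝ) : ℂ)) *
      star (V : Matrix n n ℂ) := by
    conv_lhs => rw [hA.1.eq_eigenvectorUnitary_mul_diagonal]
    rw [← Matrix.smul_mul, ← Matrix.mul_smul, ← diagonal_smul]
    simp only [Complex.ofReal_mul]
    rfl
  have hlog : diagonal (fun i => (Real.log (c * hA.1.eigenvalues i) : ℂ))
      = (Real.log c : ℂ) • 1 + diagonal (fun i => (Real.log (hA.1.eigenvalues i) : ℂ)) := by
    rw [← diagonal_one, ← diagonal_smul, diagonal_add]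
    congr 1
    funext i
    simp [Real.log_mul hc.ne' (hA.eigenvalues_pos i).ne']
  rw [hcA, mlog_unitary_conj_diagonal, hlog, Matrix.mul_add, Matrix.add_mul,
    mlog_of_isHermitian hA.1, Matrix.mul_smul, Matrix.smul_mul, Matrix.mul_one,
    mem_unitaryGroup_iff.1 V.2]

theorem mlog_kronecker {A : Matrix n n ℂ} {B : Matrix m m ℂ} (hA : A.PosDef) (hB : B.PosDef) :
    mlog (A ⊗ₖ B) = mlog A ⊗ₖ 1 + 1 ⊗ₖ mlog B := by
  set V := hA.1.eigenvectorUnitary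
  set W := hB.1.eigenvectorUnitary
  let K : unitaryGroup (n × m) ℂ :=
    ⟨(V : Matrix n n ℂ) ⊗ₖ (W : Matrix m m ℂ), kronecker_mem_unitary V.2 W.2⟩
  have hK : ∀ X Y, ((V : Matrix n n ℂ) * X * star (V : Matrix n n ℂ)) ⊗ₖ
        ((W : Matrix m m ℂ) * Y * star (W : Matrix m m ℂ))
      = (K : Matrix (n × m) (n × m) ℂ) * (X ⊗ₖ Y) * star (K : Matrix (n × m) (n × m) ℂ) :=
    fun X Y => by simp only [K, star_eq_conjTranspose, conjTranspose_kronecker, mul_kronecker_mul]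
  have hlog : diagonal (fun y : n × m =>
        (Real.log (hA.1.eigenvalues y.1 * hB.1.eigenvalues y.2) : ℂ))
      = diagonal (fun i => (Real.log (hA.1.eigenvalues i) : ℂ)) ⊗ₖ 1
        + 1 ⊗ₖ diagonal (fun j => (Real.log (hB.1.eigenvalues j) : ℂ)) := by
    rw [← diagonal_one (n := n), ← diagonal_one (n := m), diagonal_kronecker_diagonal,
      diagonal_kronecker_diagonal, diagonal_add]
    congr 1
    funext y
    simp [Real.log_mul (hA.eigenvalues_pos y.1).ne' (hB.eigenvalues_pos y.2).ne']
  conv_lhs => rw [hA.1.eq_eigenvectorUnitary_mul_diagonal, hB.1.eq_eigenvectorUnitary_mul_diagonal,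
    hK, diagonal_kronecker_diagonal]
  simp only [← Complex.ofReal_mul]
  rw [mlog_unitary_conj_diagonal, hlog, Matrix.mul_add, Matrix.add_mul, ← hK, ← hK,
    mlog_of_isHermitian hA.1, mlog_of_isHermitian hB.1, Matrix.mul_one, Matrix.mul_one,
    mem_unitaryGroup_iff.1 V.2, mem_unitaryGroup_iff.1 W.2]

end MatrixLog

section BlockDiagonal

variable {ι : Type*} [Fintype ι] [DecidableEq ι] {m : ι → Type*} [∀ i, Fintype (m i)]
  [∀ i, DecidableEq (m i)]

theorem Matrix.blockDiagonal'_mem_unitaryGroup {α : Type*} [CommRing α] [StarRing α]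
    {V : ∀ i, Matrix (m i) (m i) α} (hV : ∀ i, V i ∈ unitaryGroup (m i) α) :
    blockDiagonal' V ∈ unitaryGroup ((i : ι) × m i) α := by
  rw [mem_unitaryGroup_iff, star_eq_conjTranspose, blockDiagonal'_conjTranspose,
    ← blockDiagonal'_mul, ← blockDiagonal'_one]
  exact congrArg blockDiagonal' (funext fun i => mem_unitaryGroup_iff.1 (hV i))

theorem mlog_blockDiagonal' {A : ∀ i, Matrix (m i) (m i) ℂ} (hA : ∀ i, (A i).IsHermitian) :
    mlog (blockDiagonal' A) = blockDiagonal' fun i => mlog (A i) := by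
  let V : unitaryGroup ((i : ι) × m i) ℂ :=
    ⟨blockDiagonal' fun i => (hA i).eigenvectorUnitary,
      blockDiagonal'_mem_unitaryGroup fun i => (hA i).eigenvectorUnitary.2⟩
  have hblock : ∀ d : ∀ i, m i → ℝ,
      (blockDiagonal' fun i => ((hA i).eigenvectorUnitary : Matrix (m i) (m i) ℂ) *
        diagonal (fun j => (d i j : ℂ)) * star ((hA i).eigenvectorUnitary : Matrix (m i) (m i) ℂ))
      = (V : Matrix ((i : ι) × m i) ((i : ι) × m i) ℂ) * diagonal (fun x => (d x.1 x.2 : ℂ)) *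
        star (V : Matrix ((i : ι) × m i) ((i : ι) × m i) ℂ) := fun d => by
    rw [← blockDiagonal'_diagonal fun i j => (d i j : ℂ)]
    simp only [V, star_eq_conjTranspose, blockDiagonal'_conjTranspose, blockDiagonal'_mul]
  conv_lhs => rw [show A = _ from funext fun i => (hA i).eq_eigenvectorUnitary_mul_diagonal]
  rw [hblock, mlog_unitary_conj_diagonal]
  simp only [mlog_of_isHermitian (hA _)]
  rw [hblock fun i j => Real.log ((hA i).eigenvalues j)]

theorem relEnt_blockDiagonal' {A B : ∀ i, Matrix (m i) (m i) ℂ}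
    (hA : ∀ i, (A i).IsHermitian) (hB : ∀ i, (B i).IsHermitian) :
    relEnt (blockDiagonal' A) (blockDiagonal' B) = ∑ i, relEnt (A i) (B i) := by
  simp only [relEnt, mlog_blockDiagonal' hA, mlog_blockDiagonal' hB, ← blockDiagonal'_mul,
    trace_blockDiagonal', ← Finset.sum_sub_distrib, Complex.re_sum]

end BlockDiagonal

section RelativeEntropy

variable {n m : Type*} [Fintype n] [DecidableEq n] [Fintype m] [DecidableEq m]

theorem relEnt_self (A : Matrix n n ℂ) : relEnt A A = 0 := by
  simp [relEnt]

theorem relEnt_unitary_conj (W : unitaryGroup n ℂ) {A B : Matrix n n ℂ} (hA : A.IsHermitian)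
    (hB : B.IsHermitian) :
    relEnt ((W : Matrix n n ℂ) * A * star (W : Matrix n n ℂ))
      ((W : Matrix n n ℂ) * B * star (W : Matrix n n ℂ)) = relEnt A B := by
  have htrace : ∀ X, ((W : Matrix n n ℂ) * A * star (W : Matrix n n ℂ) *
      ((W : Matrix n n ℂ) * X * star (W : Matrix n n ℂ))).trace = (A * X).trace := fun X => by
    rw [← Unitary.conjStarAlgAut_apply (S := ℂ), ← Unitary.conjStarAlgAut_apply (S := ℂ),
      ← map_mul, Unitary.conjStarAlgAut_apply, trace_mul_cycle, mem_unitaryGroup_iff'.1 W.2,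
      Matrix.one_mul]
  simp only [relEnt, mlog_unitary_conj W hA, mlog_unitary_conj W hB, htrace]

theorem relEnt_smul {c d : ℝ} (hc : 0 < c) (hd : 0 < d) {A B : Matrix n n ℂ} (hA : A.PosDef)
    (hB : B.PosDef) (hA1 : A.trace = 1) :
    relEnt ((c : ℂ) • A) ((d : ℂ) • B) = c * Real.log (c / d) + c * relEnt A B := by
  simp only [relEnt, mlog_smul hc hA, mlog_smul hd hB, Matrix.mul_add, Matrix.smul_mul,
    Matrix.mul_smul, Matrix.mul_one, trace_add, trace_smul, hA1]
  simp [Real.log_div hc.ne' hd.ne']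
  ring

theorem relEnt_kronecker {ρ σ : Matrix n n ℂ} {χ τ : Matrix m m ℂ} (hρ : ρ.PosDef)
    (hσ : σ.PosDef) (hχ : χ.PosDef) (hτ : τ.PosDef) (hρ1 : ρ.trace = 1) (hχ1 : χ.trace = 1) :
    relEnt (ρ ⊗ₖ χ) (σ ⊗ₖ τ) = relEnt ρ σ + relEnt χ τ := by
  simp only [relEnt, mlog_kronecker hρ hχ, mlog_kronecker hσ hτ, Matrix.mul_add,
    ← mul_kronecker_mul, trace_add, trace_kronecker, hρ1, hχ1, mul_one, one_mul]
  simp only [Complex.sub_re, Complex.add_re]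
  ring

end RelativeEntropy

theorem relEnt_block_encoded_general {ι : Type*} [Fintype ι] [DecidableEq ι] (da db : ι → ℕ)
    (p q : ι → ℝ) (hp : ∀ α, 0 < p α) (hq : ∀ α, 0 < q α)
    (ρ σ : ∀ α, Matrix (Fin (da α)) (Fin (da α)) ℂ) (hρ : ∀ α, IsDensity (ρ α))
    (hρpd : ∀ α, (ρ α).PosDef) (hσpd : ∀ α, (σ α).PosDef)
    (χ : ∀ α, Matrix (Fin (db α)) (Fin (db α)) ℂ) (hχ : ∀ α, IsDensity (χ α))
    (hχpd : ∀ α, (χ α).PosDef)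
    (U : Matrix.unitaryGroup ((α : ι) × (Fin (da α) × Fin (db α))) ℂ) :
    relEnt
      ((U : Matrix _ _ ℂ) *
        Matrix.blockDiagonal' (fun α => ((p α : ℂ) • (ρ α ⊗ₖ χ α))) * star (U : Matrix _ _ ℂ))
      ((U : Matrix _ _ ℂ) *
        Matrix.blockDiagonal' (fun α => ((q α : ℂ) • (σ α ⊗ₖ χ α))) * star (U : Matrix _ _ ℂ)) =
      ∑ α, p α * Real.log (p α / q α) + ∑ α, p α * relEnt (ρ α) (σ α) := by
  have hρχ α : (ρ α ⊗ₖ χ α).PosDef := (hρpd α).kronecker (hχpd α)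
  have hσχ α : (σ α ⊗ₖ χ α).PosDef := (hσpd α).kronecker (hχpd α)
  have hblockρ α : ((p α : ℂ) • (ρ α ⊗ₖ χ α)).IsHermitian :=
    ((hρχ α).smul (Complex.zero_lt_real.2 (hp α))).1
  have hblockσ α : ((q α : ℂ) • (σ α ⊗ₖ χ α)).IsHermitian :=
    ((hσχ α).smul (Complex.zero_lt_real.2 (hq α))).1
  rw [relEnt_unitary_conj U (isHermitian_blockDiagonal'_iff.2 hblockρ)
      (isHermitian_blockDiagonal'_iff.2 hblockσ), relEnt_blockDiagonal' hblockρ hblockσ,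
    ← Finset.sum_add_distrib]
  refine Finset.sum_congr rfl fun α _ => ?_
  have htrace : (ρ α ⊗ₖ χ α).trace = 1 := by rw [trace_kronecker, (hρ α).2, (hχ α).2, one_mul]
  rw [relEnt_smul (hp α) (hq α) (hρχ α) (hσχ α) htrace,
    relEnt_kronecker (hρpd α) (hσpd α) (hχpd α) (hχpd α) (hρ α).2 (hχ α).2, relEnt_self, add_zero]

/-- equality of bulk and boundary relative entropy for algebraic encodings:
`S(ρ̃_A ‖ σ̃_A) = Σ_α p_α log(p_α/q_α) + Σ_α p_α S(ρ_{a_α} ‖ σ_{a_α})`. -/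
theorem relEnt_block_encoded {ι : Type*} [Fintype ι] [DecidableEq ι] (da db : ι → ℕ)
    (p q : ι → ℝ) (hp : ∀ α, 0 < p α) (hp1 : ∑ α, p α = 1)
    (hq : ∀ α, 0 < q α) (hq1 : ∑ α, q α = 1)
    (ρ σ : ∀ α, Matrix (Fin (da α)) (Fin (da α)) ℂ)
    (hρ : ∀ α, IsDensity (ρ α)) (hσ : ∀ α, IsDensity (σ α))
    (hρpd : ∀ α, (ρ α).PosDef) (hσpd : ∀ α, (σ α).PosDef)
    (χ : ∀ α, Matrix (Fin (db α)) (Fin (db α)) ℂ) (hχ : ∀ α, IsDensity (χ α))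
    (hχpd : ∀ α, (χ α).PosDef)
    (U : Matrix.unitaryGroup ((α : ι) × (Fin (da α) × Fin (db α))) ℂ) :
    relEnt
      ((U : Matrix _ _ ℂ) *
        Matrix.blockDiagonal' (fun α => ((p α : ℂ) • (ρ α ⊗ₖ χ α))) * star (U : Matrix _ _ ℂ))
      ((U : Matrix _ _ ℂ) *
        Matrix.blockDiagonal' (fun α => ((q α : ℂ) • (σ α ⊗ₖ χ α))) * star (U : Matrix _ _ ℂ)) =
      ∑ α, p α * Real.log (p α / q α) + ∑ α, p α * relEnt (ρ α) (σ α) :=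
  relEnt_block_encoded_general da db p q hp hq ρ σ hρ hρpd hσpd χ hχ hχpd U
end

section
/- Equality of bulk and boundary sandwiched Rényi relative entropy for algebraic encodings: in the block setup, with encoded states ρ̃_A = U(⊕_α p_α ρ_{a_α} ⊗ χ_α)U† and σ̃_A = U(⊕_α q_α σ_{a_α} ⊗ χ_α)U† for a unitary U, for every n ∈ (0,∞) with n ≠ 1 one has S_n(ρ̃_A ‖ σ̃_A) = (n−1)⁻¹ · log [ Σ_α p_α^n q_α^{1−n} · exp((n−1) S_n(ρ_{a_α} ‖ σ_{a_α})) ]. -/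
/-!
`mpow A r` applies `x ↦ x ^ r` to the eigenvalues of `A`. By Lagrange interpolation it is a
polynomial in `A`, so any unitary diagonalization `A = V D V†` computes it as `V D^r V†`. Hence
`mpow` commutes with unitary conjugation and block sums, and is multiplicative on scalar multiples
and Kronecker products of positive matrices. With `s = (1 - n) / (2n)` this gives
`σ̃^s ρ̃ σ̃^s = U (⊕_α p_α q_α^{2s} σ_α^s ρ_α σ_α^s ⊗ χ_α^{2s+1}) U†`, and since `(2s + 1) n = 1`
and `Tr χ_α = 1`, the trace of its `n`-th power is `Σ_α p_α^n q_α^{1-n} Tr (σ_α^s ρ_α σ_α^s)^n`.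
-/

open Matrix
open scoped Kronecker ComplexOrder

open Polynomial

namespace Matrix

section UnitaryConj

variable {m : Type*} [Fintype m] [DecidableEq m]

lemma aeval_unitary_conj_diagonal {V : Matrix m m ℂ} (hV : V ∈ unitaryGroup m ℂ) (d : m → ℂ)
    (p : ℂ[X]) :
    aeval (V * diagonal d * star V) p = V * diagonal (fun i => p.eval (d i)) * star V := by
  have hconj : ∀ X, V * X * star V = Unitary.conjStarAlgAut ℂ _ ⟨V, hV⟩ X := fun _ => rfl
  rw [hconj, hconj, aeval_algHom_apply, ← diagonalAlgHom_apply ℂ, aeval_algHom_apply,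
    aeval_pi_apply, diagonalAlgHom_apply]
  rfl

lemma unitary_conj_diagonal_congr {V W : Matrix m m ℂ} (hV : V ∈ unitaryGroup m ℂ)
    (hW : W ∈ unitaryGroup m ℂ) {d e : m → ℂ}
    (h : V * diagonal d * star V = W * diagonal e * star W) (g : ℂ → ℂ) :
    V * diagonal (g ∘ d) * star V = W * diagonal (g ∘ e) * star W := by
  set p := Lagrange.interpolate (Finset.univ.image d ∪ Finset.univ.image e) id g
  have hp : ∀ z ∈ Finset.univ.image d ∪ Finset.univ.image e, p.eval z = g z := fun z hz =>
    Lagrange.eval_interpolate_at_node g (Set.injOn_id _) hz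
  have hd : g ∘ d = fun i => p.eval (d i) := funext fun i => (hp _ (by simp)).symm
  have he : g ∘ e = fun i => p.eval (e i) := funext fun i => (hp _ (by simp)).symm
  rw [hd, he, ← aeval_unitary_conj_diagonal hV, ← aeval_unitary_conj_diagonal hW, h]

lemma isHermitian_conj_diagonal_ofReal (V : Matrix m m ℂ) (d : m → ℝ) :
    (V * diagonal (fun i => (d i : ℂ)) * star V).IsHermitian :=
  isHermitian_mul_mul_conjTranspose V
    (isHermitian_diagonal_of_self_adjoint _ (funext fun i => Complex.conj_ofReal (d i)))

lemma mpow_unitary_conj_diagonal {V : Matrix m m ℂ} (hV : V ∈ unitaryGroup m ℂ) (d : m → ℝ)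
    (r : ℝ) :
    mpow (V * diagonal (fun i => (d i : ℂ)) * star V) r =
      V * diagonal (fun i => ((d i ^ r : ℝ) : ℂ)) * star V := by
  have hA := isHermitian_conj_diagonal_ofReal V d
  rw [mpow, dif_pos hA]
  exact unitary_conj_diagonal_congr (Subtype.prop _) hV hA.spectral_theorem.symm
    (fun z => ((z.re ^ r : ℝ) : ℂ))

lemma unitary_conj_diagonal_mul {V : Matrix m m ℂ} (hV : V ∈ unitaryGroup m ℂ) (d e : m → ℂ) :
    V * diagonal d * star V * (V * diagonal e * star V) = V * diagonal (d * e) * star V := by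
  have hVV : ∀ X, star V * (V * X) = X := fun X => by
    rw [← mul_assoc, mem_unitaryGroup_iff'.mp hV, one_mul]
  simp only [mul_assoc, hVV]
  rw [← mul_assoc (diagonal d), diagonal_mul_diagonal']
  rfl

lemma IsHermitian.exists_unitary_conj_diagonal {A : Matrix m m ℂ} (hA : A.IsHermitian)
    {P : ℝ → Prop} (hP : ∀ i, P (hA.eigenvalues i)) :
    ∃ V ∈ unitaryGroup m ℂ, ∃ d : m → ℝ, (∀ i, P (d i)) ∧
      A = V * diagonal (fun i => (d i : ℂ)) * star V :=
  ⟨_, Subtype.prop _, _, hP, hA.spectral_theorem⟩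

end UnitaryConj

section BlockDiagonal

variable {ι R : Type*} [Fintype ι] [DecidableEq ι] [CommRing R] [StarRing R]
  {k : ι → Type*} [∀ α, Fintype (k α)] [∀ α, DecidableEq (k α)]

lemma blockDiagonal'_mem_unitaryGroup_s7 {V : ∀ α, Matrix (k α) (k α) R}
    (hV : ∀ α, V α ∈ unitaryGroup (k α) R) :
    blockDiagonal' V ∈ unitaryGroup ((α : ι) × k α) R := by
  rw [mem_unitaryGroup_iff, star_eq_conjTranspose, blockDiagonal'_conjTranspose,
    ← blockDiagonal'_mul]
  simp_rw [← star_eq_conjTranspose, mem_unitaryGroup_iff.mp (hV _)]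
  exact blockDiagonal'_one

lemma blockDiagonal'_conj_diagonal (V : ∀ α, Matrix (k α) (k α) R)
    (d : ∀ α, k α → R) :
    blockDiagonal' (fun α => V α * diagonal (d α) * star (V α)) =
      blockDiagonal' V * diagonal (fun x => d x.1 x.2) * star (blockDiagonal' V) := by
  rw [star_eq_conjTranspose, blockDiagonal'_conjTranspose, ← blockDiagonal'_diagonal,
    ← blockDiagonal'_mul, ← blockDiagonal'_mul]
  rfl

end BlockDiagonal

lemma kronecker_conj_diagonal {m l : Type*} [Fintype m] [DecidableEq m] [Fintype l]
    [DecidableEq l]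
    (V : Matrix m m ℂ) (W : Matrix l l ℂ) (d : m → ℂ) (e : l → ℂ) :
    (V * diagonal d * star V) ⊗ₖ (W * diagonal e * star W) =
      (V ⊗ₖ W) * diagonal (fun x => d x.1 * e x.2) * star (V ⊗ₖ W) := by
  rw [mul_kronecker_mul, mul_kronecker_mul, diagonal_kronecker_diagonal, star_eq_conjTranspose,
    star_eq_conjTranspose, star_eq_conjTranspose, conjTranspose_kronecker]

section MatrixPower

variable {m : Type*} [Fintype m] [DecidableEq m] {A B : Matrix m m ℂ}

lemma IsHermitian.trace_mpow (hA : A.IsHermitian) (r : ℝ) :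
    (mpow A r).trace = ∑ i, ((hA.eigenvalues i ^ r : ℝ) : ℂ) := by
  rw [mpow, dif_pos hA, trace_mul_cycle, Unitary.coe_star_mul_self,
    one_mul, trace_diagonal]

lemma IsHermitian.mpow_one (hA : A.IsHermitian) : mpow A 1 = A := by
  obtain ⟨V, hV, d, -, rfl⟩ := hA.exists_unitary_conj_diagonal (P := fun _ => True) fun _ => trivial
  simp_rw [mpow_unitary_conj_diagonal hV, Real.rpow_one]

lemma IsHermitian.mpow_zero (hA : A.IsHermitian) : mpow A 0 = 1 := by
  obtain ⟨V, hV, d, -, rfl⟩ := hA.exists_unitary_conj_diagonal (P := fun _ => True) fun _ => trivial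
  simp_rw [mpow_unitary_conj_diagonal hV, Real.rpow_zero, Complex.ofReal_one, diagonal_one,
    mul_one]
  exact mem_unitaryGroup_iff.mp hV

lemma IsHermitian.mpow_unitary_conj (hA : A.IsHermitian) {U : Matrix m m ℂ}
    (hU : U ∈ unitaryGroup m ℂ) (r : ℝ) :
    mpow (U * A * star U) r = U * mpow A r * star U := by
  obtain ⟨V, hV, d, -, rfl⟩ := hA.exists_unitary_conj_diagonal (P := fun _ => True) fun _ => trivial
  have hconj : ∀ D, U * (V * D * star V) * star U = U * V * D * star (U * V) := fun D => by
    simp only [star_mul, mul_assoc]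
  rw [hconj, mpow_unitary_conj_diagonal (mul_mem hU hV), mpow_unitary_conj_diagonal hV, hconj]

lemma posSemidef_mpow (hA : A.PosSemidef) (r : ℝ) : (mpow A r).PosSemidef := by
  obtain ⟨V, hV, d, hd, rfl⟩ := hA.isHermitian.exists_unitary_conj_diagonal hA.eigenvalues_nonneg
  rw [mpow_unitary_conj_diagonal hV]
  exact (posSemidef_diagonal_iff.mpr fun i => by
    simpa using Real.rpow_nonneg (hd i) r).mul_mul_conjTranspose_same V

lemma PosSemidef.mpow_mpow (hA : A.PosSemidef) (a b : ℝ) :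
    mpow (mpow A a) b = mpow A (a * b) := by
  obtain ⟨V, hV, d, hd, rfl⟩ := hA.isHermitian.exists_unitary_conj_diagonal hA.eigenvalues_nonneg
  simp_rw [mpow_unitary_conj_diagonal hV, ← Real.rpow_mul (hd _)]

lemma PosSemidef.mpow_smul (hA : A.PosSemidef) {c : ℝ} (hc : 0 ≤ c) (r : ℝ) :
    mpow ((c : ℂ) • A) r = ((c ^ r : ℝ) : ℂ) • mpow A r := by
  obtain ⟨V, hV, d, hd, rfl⟩ := hA.isHermitian.exists_unitary_conj_diagonal hA.eigenvalues_nonneg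
  have hsmul : ∀ (a : ℝ) (e : m → ℝ), ((a : ℂ) • (V * diagonal (fun i => (e i : ℂ)) * star V)) =
      V * diagonal (fun i => ((a * e i : ℝ) : ℂ)) * star V := fun a e => by
    rw [← smul_mul_assoc, ← mul_smul_comm, ← diagonal_smul]
    push_cast
    rfl
  rw [hsmul, mpow_unitary_conj_diagonal hV, mpow_unitary_conj_diagonal hV, hsmul]
  simp_rw [Real.mul_rpow hc (hd _)]

lemma PosDef.mpow_mul_mpow (hA : A.PosDef) (a b : ℝ) :
    mpow A a * mpow A b = mpow A (a + b) := by
  obtain ⟨V, hV, d, hd, rfl⟩ := hA.isHermitian.exists_unitary_conj_diagonal hA.eigenvalues_pos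
  simp_rw [mpow_unitary_conj_diagonal hV, unitary_conj_diagonal_mul hV, Real.rpow_add (hd _)]
  push_cast
  rfl

lemma PosSemidef.mpow_kronecker {l : Type*} [Fintype l] [DecidableEq l] {B : Matrix l l ℂ}
    (hA : A.PosSemidef) (hB : B.PosSemidef) (r : ℝ) :
    mpow (A ⊗ₖ B) r = mpow A r ⊗ₖ mpow B r := by
  obtain ⟨V, hV, d, hd, rfl⟩ := hA.isHermitian.exists_unitary_conj_diagonal hA.eigenvalues_nonneg
  obtain ⟨W, hW, e, he, rfl⟩ := hB.isHermitian.exists_unitary_conj_diagonal hB.eigenvalues_nonneg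
  have hVW := kronecker_mem_unitary hV hW
  rw [mpow_unitary_conj_diagonal hV, mpow_unitary_conj_diagonal hW,
    kronecker_conj_diagonal, kronecker_conj_diagonal]
  simp_rw [← Complex.ofReal_mul, mpow_unitary_conj_diagonal hVW, Real.mul_rpow (hd _) (he _)]

lemma PosSemidef.re_trace_mpow_pos (hA : A.PosSemidef) (hA0 : A ≠ 0) (r : ℝ) :
    0 < (mpow A r).trace.re := by
  obtain ⟨i, hi⟩ : ∃ i, hA.isHermitian.eigenvalues i ≠ 0 := by
    by_contra! h
    exact hA0 (hA.isHermitian.eigenvalues_eq_zero_iff.mp (funext h))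
  rw [hA.isHermitian.trace_mpow, Complex.re_sum]
  simp_rw [Complex.ofReal_re]
  exact Finset.sum_pos' (fun j _ => Real.rpow_nonneg (hA.eigenvalues_nonneg j) r)
    ⟨i, Finset.mem_univ i, Real.rpow_pos_of_pos ((hA.eigenvalues_nonneg i).lt_of_ne' hi) r⟩

lemma PosDef.mpow_mul_mul_mpow (hA : A.PosDef) (a b : ℝ) :
    mpow A a * A * mpow A b = mpow A (a + 1 + b) := by
  nth_rw 2 [← hA.isHermitian.mpow_one]
  rw [hA.mpow_mul_mpow, hA.mpow_mul_mpow]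

lemma PosSemidef.mpow_mul_mul_mpow (hB : B.PosSemidef) (hA : A.PosSemidef) (r : ℝ) :
    (mpow A r * B * mpow A r).PosSemidef := by
  simpa [(posSemidef_mpow hA r).isHermitian.eq] using hB.mul_mul_conjTranspose_same (mpow A r)

lemma PosDef.mpow_mul_mul_mpow_ne_zero (hA : A.PosDef) (hB : B ≠ 0) (r : ℝ) :
    mpow A r * B * mpow A r ≠ 0 := by
  intro h
  have hinv : mpow A (-r) * mpow A r = 1 ∧ mpow A r * mpow A (-r) = 1 := by
    rw [hA.mpow_mul_mpow, hA.mpow_mul_mpow, neg_add_cancel, add_neg_cancel,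
      hA.isHermitian.mpow_zero]
    exact ⟨rfl, rfl⟩
  apply hB
  calc B = (mpow A (-r) * mpow A r) * B * (mpow A r * mpow A (-r)) := by
        rw [hinv.1, hinv.2, one_mul, mul_one]
    _ = mpow A (-r) * (mpow A r * B * mpow A r) * mpow A (-r) := by simp only [mul_assoc]
    _ = 0 := by rw [h, mul_zero, zero_mul]

end MatrixPower

lemma mpow_blockDiagonal' {ι : Type*} [Fintype ι] [DecidableEq ι]
    {k : ι → Type*} [∀ α, Fintype (k α)] [∀ α, DecidableEq (k α)]
    {A : ∀ α, Matrix (k α) (k α) ℂ} (hA : ∀ α, (A α).IsHermitian) (r : ℝ) :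
    mpow (blockDiagonal' A) r = blockDiagonal' (fun α => mpow (A α) r) := by
  choose V hV d _ hVd using fun α =>
    (hA α).exists_unitary_conj_diagonal (P := fun _ => True) fun _ => trivial
  obtain rfl : A = _ := funext hVd
  simp_rw [mpow_unitary_conj_diagonal (hV _), blockDiagonal'_conj_diagonal,
    mpow_unitary_conj_diagonal (blockDiagonal'_mem_unitaryGroup_s7 hV)]

section BlockEncoding

variable {ι : Type*} [Fintype ι] [DecidableEq ι]
  {a b : ι → Type*} [∀ α, Fintype (a α)] [∀ α, DecidableEq (a α)] [∀ α, Fintype (b α)]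
  [∀ α, DecidableEq (b α)]

noncomputable def blockEncode (U : Matrix ((α : ι) × (a α × b α)) ((α : ι) × (a α × b α)) ℂ)
    (p : ι → ℝ) (ρ : ∀ α, Matrix (a α) (a α) ℂ) (χ : ∀ α, Matrix (b α) (b α) ℂ) :
    Matrix ((α : ι) × (a α × b α)) ((α : ι) × (a α × b α)) ℂ :=
  U * blockDiagonal' (fun α => (p α : ℂ) • (ρ α ⊗ₖ χ α)) * star U

variable {U : Matrix ((α : ι) × (a α × b α)) ((α : ι) × (a α × b α)) ℂ}

lemma trace_blockEncode (hU : U ∈ unitaryGroup _ ℂ) (p : ι → ℝ) (ρ : ∀ α, Matrix (a α) (a α) ℂ)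
    (χ : ∀ α, Matrix (b α) (b α) ℂ) :
    (blockEncode U p ρ χ).trace = ∑ α, (p α : ℂ) * ((ρ α).trace * (χ α).trace) := by
  rw [blockEncode, trace_mul_cycle, mem_unitaryGroup_iff'.mp hU, one_mul, trace_blockDiagonal']
  simp_rw [trace_smul, trace_kronecker, smul_eq_mul]

lemma blockEncode_mul_mul (hU : U ∈ unitaryGroup _ ℂ) (p q : ι → ℝ)
    (ρ σ : ∀ α, Matrix (a α) (a α) ℂ) (χ ω : ∀ α, Matrix (b α) (b α) ℂ) :
    blockEncode U p ρ χ * blockEncode U q σ ω * blockEncode U p ρ χ =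
      blockEncode U (fun α => p α * q α * p α) (fun α => ρ α * σ α * ρ α)
        (fun α => χ α * ω α * χ α) := by
  have hUU : ∀ X, star U * (U * X) = X := fun X => by
    rw [← mul_assoc, mem_unitaryGroup_iff'.mp hU, one_mul]
  simp only [blockEncode, mul_assoc, hUU]
  simp only [← mul_assoc, ← blockDiagonal'_mul, smul_mul_smul_comm, mul_kronecker_mul]
  push_cast
  rfl

lemma mpow_blockEncode (hU : U ∈ unitaryGroup _ ℂ) {p : ι → ℝ} (hp : ∀ α, 0 ≤ p α)
    {ρ : ∀ α, Matrix (a α) (a α) ℂ} {χ : ∀ α, Matrix (b α) (b α) ℂ}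
    (hρ : ∀ α, (ρ α).PosSemidef) (hχ : ∀ α, (χ α).PosSemidef) (r : ℝ) :
    mpow (blockEncode U p ρ χ) r =
      blockEncode U (fun α => p α ^ r) (fun α => mpow (ρ α) r) (fun α => mpow (χ α) r) := by
  have hherm : ∀ α, ((p α : ℂ) • (ρ α ⊗ₖ χ α)).IsHermitian := fun α =>
    (((hρ α).kronecker (hχ α)).smul (Complex.zero_le_real.mpr (hp α))).isHermitian
  rw [blockEncode, (isHermitian_blockDiagonal'_iff.mpr hherm).mpow_unitary_conj hU,
    mpow_blockDiagonal' hherm]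
  simp_rw [((hρ _).kronecker (hχ _)).mpow_smul (hp _), (hρ _).mpow_kronecker (hχ _)]
  rfl

lemma mpow_mul_mul_mpow_blockEncode (hU : U ∈ unitaryGroup _ ℂ) {p q : ι → ℝ}
    (hq : ∀ α, 0 ≤ q α) (ρ : ∀ α, Matrix (a α) (a α) ℂ) {σ : ∀ α, Matrix (a α) (a α) ℂ}
    {χ : ∀ α, Matrix (b α) (b α) ℂ} (hσ : ∀ α, (σ α).PosSemidef) (hχ : ∀ α, (χ α).PosSemidef)
    (s : ℝ) :
    mpow (blockEncode U q σ χ) s * blockEncode U p ρ χ * mpow (blockEncode U q σ χ) s =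
      blockEncode U (fun α => q α ^ s * p α * q α ^ s)
        (fun α => mpow (σ α) s * ρ α * mpow (σ α) s)
        (fun α => mpow (χ α) s * χ α * mpow (χ α) s) := by
  rw [mpow_blockEncode hU hq hσ hχ]
  exact blockEncode_mul_mul hU _ _ _ _ _ _

lemma re_trace_mpow_sandwich_blockEncode (hU : U ∈ unitaryGroup _ ℂ) {p q : ι → ℝ}
    (hp : ∀ α, 0 ≤ p α) (hq : ∀ α, 0 < q α) {ρ σ : ∀ α, Matrix (a α) (a α) ℂ}
    {χ : ∀ α, Matrix (b α) (b α) ℂ} (hρ : ∀ α, (ρ α).PosSemidef) (hσ : ∀ α, (σ α).PosDef)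
    (hχ : ∀ α, (χ α).PosDef) (hχ1 : ∀ α, (χ α).trace = 1) {s n : ℝ} (hsn : 2 * s * n = 1 - n) :
    (mpow (mpow (blockEncode U q σ χ) s * blockEncode U p ρ χ * mpow (blockEncode U q σ χ) s)
        n).trace.re =
      ∑ α, p α ^ n * q α ^ (1 - n) * (mpow (mpow (σ α) s * ρ α * mpow (σ α) s) n).trace.re := by
  have hqs : ∀ α, 0 ≤ q α ^ s := fun α => (Real.rpow_pos_of_pos (hq α) s).le
  have hscalar : ∀ α, (q α ^ s * p α * q α ^ s) ^ n = p α ^ n * q α ^ (1 - n) := fun α => by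
    rw [Real.mul_rpow (mul_nonneg (hqs α) (hp α)) (hqs α), Real.mul_rpow (hqs α) (hp α),
      ← Real.rpow_mul (hq α).le, ← hsn, show 2 * s * n = s * n + s * n by ring,
      Real.rpow_add (hq α)]
    ring
  have hχn : ∀ α, mpow (mpow (χ α) s * χ α * mpow (χ α) s) n = χ α := fun α => by
    rw [(hχ α).mpow_mul_mul_mpow, (hχ α).posSemidef.mpow_mpow,
      show (s + 1 + s) * n = 1 by linarith, (hχ α).isHermitian.mpow_one]
  rw [mpow_mul_mul_mpow_blockEncode hU (fun α => (hq α).le) ρ (fun α => (hσ α).posSemidef)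
      (fun α => (hχ α).posSemidef),
    mpow_blockEncode hU (fun α => mul_nonneg (mul_nonneg (hqs α) (hp α)) (hqs α))
      (fun α => (hρ α).mpow_mul_mul_mpow (hσ α).posSemidef s)
      (fun α => (hχ α).posSemidef.mpow_mul_mul_mpow (hχ α).posSemidef s),
    trace_blockEncode hU, Complex.re_sum]
  simp_rw [hχn, hχ1, mul_one, hscalar, Complex.re_ofReal_mul]

end BlockEncoding

end Matrix

lemma exp_mul_SRenyi {m : Type*} [Fintype m] [DecidableEq m] {n : ℝ} (hn1 : n ≠ 1)
    {ρ σ : Matrix m m ℂ} (hρ : ρ.PosSemidef) (hρ0 : ρ ≠ 0) (hσ : σ.PosDef) :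
    Real.exp ((n - 1) * SRenyi n ρ σ) =
      (mpow (mpow σ ((1 - n) / (2 * n)) * ρ * mpow σ ((1 - n) / (2 * n))) n).trace.re := by
  have hpos := (hρ.mpow_mul_mul_mpow hσ.posSemidef ((1 - n) / (2 * n))).re_trace_mpow_pos
    (hσ.mpow_mul_mul_mpow_ne_zero hρ0 _) n
  rw [SRenyi, ← mul_assoc, mul_inv_cancel₀ (sub_ne_zero.mpr hn1), one_mul, Real.exp_log hpos]

theorem srenyi_block_encoded_general {ι : Type*} [Fintype ι] [DecidableEq ι] (da db : ι → ℕ)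
    (p q : ι → ℝ) (hp : ∀ α, 0 < p α)
    (hq : ∀ α, 0 < q α)
    (ρ σ : ∀ α, Matrix (Fin (da α)) (Fin (da α)) ℂ)
    (hρ : ∀ α, IsDensity (ρ α))
    (hσpd : ∀ α, (σ α).PosDef)
    (χ : ∀ α, Matrix (Fin (db α)) (Fin (db α)) ℂ) (hχ : ∀ α, IsDensity (χ α))
    (hχpd : ∀ α, (χ α).PosDef)
    (U : Matrix.unitaryGroup ((α : ι) × (Fin (da α) × Fin (db α))) ℂ)
    (n : ℝ) (hn : 0 < n) (hn1 : n ≠ 1) :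
    SRenyi n
      ((U : Matrix _ _ ℂ) *
        Matrix.blockDiagonal' (fun α => ((p α : ℂ) • (ρ α ⊗ₖ χ α))) * star (U : Matrix _ _ ℂ))
      ((U : Matrix _ _ ℂ) *
        Matrix.blockDiagonal' (fun α => ((q α : ℂ) • (σ α ⊗ₖ χ α))) * star (U : Matrix _ _ ℂ)) =
      (n - 1)⁻¹ *
        Real.log (∑ α, p α ^ n * q α ^ (1 - n) *
          Real.exp ((n - 1) * SRenyi n (ρ α) (σ α))) := by
  have hsn : 2 * ((1 - n) / (2 * n)) * n = 1 - n := by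
    field_simp
  have hρ0 : ∀ α, ρ α ≠ 0 := fun α h => by simpa [h] using (hρ α).2
  rw [SRenyi]
  congr 2
  refine (re_trace_mpow_sandwich_blockEncode U.2 (fun α => (hp α).le) hq (fun α => (hρ α).1)
    hσpd hχpd (fun α => (hχ α).2) hsn).trans ?_
  exact Finset.sum_congr rfl fun α _ => by rw [exp_mul_SRenyi hn1 (hρ α).1 (hρ0 α) (hσpd α)]

/-- equality of bulk and boundary sandwiched Rényi relative entropy for
algebraic encodings. -/
theorem srenyi_block_encoded {ι : Type*} [Fintype ι] [DecidableEq ι] (da db : ι → ℕ)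
    (p q : ι → ℝ) (hp : ∀ α, 0 < p α) (hp1 : ∑ α, p α = 1)
    (hq : ∀ α, 0 < q α) (hq1 : ∑ α, q α = 1)
    (ρ σ : ∀ α, Matrix (Fin (da α)) (Fin (da α)) ℂ)
    (hρ : ∀ α, IsDensity (ρ α)) (hσ : ∀ α, IsDensity (σ α))
    (hσpd : ∀ α, (σ α).PosDef)
    (χ : ∀ α, Matrix (Fin (db α)) (Fin (db α)) ℂ) (hχ : ∀ α, IsDensity (χ α))
    (hχpd : ∀ α, (χ α).PosDef)
    (U : Matrix.unitaryGroup ((α : ι) × (Fin (da α) × Fin (db α))) ℂ)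
    (n : ℝ) (hn : 0 < n) (hn1 : n ≠ 1) :
    SRenyi n
      ((U : Matrix _ _ ℂ) *
        Matrix.blockDiagonal' (fun α => ((p α : ℂ) • (ρ α ⊗ₖ χ α))) * star (U : Matrix _ _ ℂ))
      ((U : Matrix _ _ ℂ) *
        Matrix.blockDiagonal' (fun α => ((q α : ℂ) • (σ α ⊗ₖ χ α))) * star (U : Matrix _ _ ℂ)) =
      (n - 1)⁻¹ *
        Real.log (∑ α, p α ^ n * q α ^ (1 - n) *
          Real.exp ((n - 1) * SRenyi n (ρ α) (σ α))) :=
  srenyi_block_encoded_general da db p q hp hq ρ σ hρ hσpd χ hχ hχpd U n hn hn1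
end

section
/- Constrained optimization over the probability simplex: let A range over a finite nonempty index set, let α ∈ (0,1), let (q_A) and (w_A) be probability distributions with all entries strictly positive, and let (s_A) be real numbers. Then the supremum over all probability distributions (p_A) (with p_A ≥ 0, Σ_A p_A = 1) of (1/α) · log [ Σ_A q_A (p_A/w_A)^α e^{α s_A} ] is attained and equals ((1−α)/α) · log [ Σ_A q_A^{1/(1−α)} w_A^{−α/(1−α)} e^{α s_A/(1−α)} ]. -/
open Matrix
open scoped Kronecker ComplexOrder

/-! With `c_A = q_A w_A^{-α} e^{α s_A}` the objective is `(1/α) log Σ_A c_A p_A^α`. Hölder's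
inequality with the conjugate exponents `1/(1-α)` and `1/α` bounds `Σ_A c_A p_A^α` by
`(Σ_A c_A^{1/(1-α)})^{1-α}` on the simplex, with equality at `p_A ∝ c_A^{1/(1-α)}`. -/

namespace Real

variable {ι : Type*} {α : ℝ}

theorem sum_mul_rpow_le (s : Finset ι) (hα0 : 0 < α) (hα1 : α < 1) {c p : ι → ℝ}
    (hc : ∀ i ∈ s, 0 ≤ c i) (hp : ∀ i ∈ s, 0 ≤ p i) :
    ∑ i ∈ s, c i * p i ^ α ≤ (∑ i ∈ s, c i ^ (1 / (1 - α))) ^ (1 - α) * (∑ i ∈ s, p i) ^ α := by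
  have hconj : HolderConjugate (1 / (1 - α)) (1 / α) := by
    rw [holderConjugate_iff]
    constructor
    · rw [lt_div_iff₀ (by linarith)]; linarith
    · field_simp; ring
  have hholder := inner_le_Lp_mul_Lq_of_nonneg s hconj hc fun i hi => rpow_nonneg (hp i hi) α
  have hpow : ∀ i ∈ s, (p i ^ α) ^ (1 / α) = p i := fun i hi => by
    rw [← rpow_mul (hp i hi), mul_one_div_cancel hα0.ne', rpow_one]
  rwa [Finset.sum_congr rfl hpow, one_div_one_div, one_div_one_div] at hholder

theorem sum_mul_rpow_normalized_rpow_eq (s : Finset ι) (hα1 : α < 1) {c : ι → ℝ}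
    (hc : ∀ i ∈ s, 0 ≤ c i) :
    ∑ i ∈ s, c i * (c i ^ (1 / (1 - α)) / ∑ j ∈ s, c j ^ (1 / (1 - α))) ^ α =
      (∑ j ∈ s, c j ^ (1 / (1 - α))) ^ (1 - α) := by
  set Z := ∑ j ∈ s, c j ^ (1 / (1 - α))
  have hZ : 0 ≤ Z := Finset.sum_nonneg fun j hj => rpow_nonneg (hc j hj) _
  have hsplit : 1 / (1 - α) = 1 + 1 / (1 - α) * α := by
    field_simp [(by linarith : 1 - α ≠ 0)]; ring
  have hterm : ∀ i ∈ s, c i * (c i ^ (1 / (1 - α)) / Z) ^ α = c i ^ (1 / (1 - α)) / Z ^ α := by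
    intro i hi
    rw [div_rpow (rpow_nonneg (hc i hi) _) hZ, ← rpow_mul (hc i hi), mul_div_assoc',
      ← rpow_one_add' (hc i hi) (hsplit ▸ one_div_ne_zero (by linarith)), ← hsplit]
  rw [Finset.sum_congr rfl hterm, ← Finset.sum_div, rpow_sub' hZ (by linarith), rpow_one]

theorem sum_mul_rpow_pos (s : Finset ι) {c p : ι → ℝ} (hc : ∀ i ∈ s, 0 < c i)
    (hp : ∀ i ∈ s, 0 ≤ p i) (hp1 : 0 < ∑ i ∈ s, p i) : 0 < ∑ i ∈ s, c i * p i ^ α := by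
  obtain ⟨i, hi, hpi⟩ :=
    Finset.exists_lt_of_sum_lt (by simpa using hp1 : ∑ i ∈ s, (0 : ℝ) < ∑ i ∈ s, p i)
  exact Finset.sum_pos' (fun j hj => mul_nonneg (hc j hj).le (rpow_nonneg (hp j hj) _))
    ⟨i, hi, mul_pos (hc i hi) (rpow_pos_of_pos hpi _)⟩

theorem isGreatest_sum_mul_rpow [Fintype ι] (hα0 : 0 < α) (hα1 : α < 1) {c : ι → ℝ}
    (hc : ∀ i, 0 ≤ c i) (hZ : 0 < ∑ i, c i ^ (1 / (1 - α))) :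
    IsGreatest {t : ℝ | ∃ p : ι → ℝ, (∀ i, 0 ≤ p i) ∧ ∑ i, p i = 1 ∧ t = ∑ i, c i * p i ^ α}
      ((∑ i, c i ^ (1 / (1 - α))) ^ (1 - α)) := by
  refine ⟨⟨fun i => c i ^ (1 / (1 - α)) / ∑ j, c j ^ (1 / (1 - α)),
    fun i => div_nonneg (rpow_nonneg (hc i) _) hZ.le, ?_, ?_⟩, ?_⟩
  · rw [← Finset.sum_div, div_self hZ.ne']
  · exact (sum_mul_rpow_normalized_rpow_eq _ hα1 fun i _ => hc i).symm
  · rintro t ⟨p, hp, hp1, rfl⟩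
    simpa [hp1] using sum_mul_rpow_le Finset.univ hα0 hα1 (fun i _ => hc i) fun i _ => hp i

theorem mul_div_rpow_mul_eq {p w : ℝ} (hp : 0 ≤ p) (hw : 0 ≤ w) (q r : ℝ) :
    q * (p / w) ^ α * r = q * w ^ (-α) * r * p ^ α := by
  rw [div_rpow hp hw, rpow_neg hw]
  ring

theorem mul_rpow_neg_mul_exp_rpow {q w : ℝ} (hq : 0 ≤ q) (hw : 0 ≤ w) (x β : ℝ) :
    (q * w ^ (-α) * exp x) ^ β = q ^ β * w ^ (-α * β) * exp (x * β) := by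
  rw [mul_rpow (mul_nonneg hq (rpow_nonneg hw _)) (exp_nonneg _), mul_rpow hq (rpow_nonneg hw _),
    ← rpow_mul hw, ← exp_mul]

end Real

theorem simplex_sup_renyi_general {ι : Type*} [Fintype ι] [Nonempty ι]
    (α : ℝ) (hα : α ∈ Set.Ioo (0 : ℝ) 1)
    (q w : ι → ℝ) (hq : ∀ A, 0 < q A)
    (hw : ∀ A, 0 < w A) (s : ι → ℝ) :
    IsGreatest
      {t : ℝ | ∃ p : ι → ℝ, (∀ A, 0 ≤ p A) ∧ (∑ A, p A = 1) ∧
        t = (1 / α) * Real.log (∑ A, q A * (p A / w A) ^ α * Real.exp (α * s A))}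
      (((1 - α) / α) *
        Real.log (∑ A, q A ^ (1 / (1 - α)) * w A ^ (-α / (1 - α)) *
          Real.exp (α * s A / (1 - α)))) := by
  obtain ⟨hα0, hα1⟩ := hα
  set c : ι → ℝ := fun A => q A * w A ^ (-α) * Real.exp (α * s A)
  have hc : ∀ A, 0 < c A := fun A => by have := hq A; have := hw A; positivity
  have hobj : ∀ p : ι → ℝ, (∀ A, 0 ≤ p A) →
      ∑ A, q A * (p A / w A) ^ α * Real.exp (α * s A) = ∑ A, c A * p A ^ α := fun p hp =>
    Finset.sum_congr rfl fun A _ => Real.mul_div_rpow_mul_eq (hp A) (hw A).le _ _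
  have hZ : ∑ A, q A ^ (1 / (1 - α)) * w A ^ (-α / (1 - α)) * Real.exp (α * s A / (1 - α)) =
      ∑ A, c A ^ (1 / (1 - α)) := Finset.sum_congr rfl fun A _ => by
    rw [Real.mul_rpow_neg_mul_exp_rpow (hq A).le (hw A).le, mul_one_div, mul_one_div]
  have hZpos : 0 < ∑ A, c A ^ (1 / (1 - α)) :=
    Finset.sum_pos (fun A _ => Real.rpow_pos_of_pos (hc A) _) Finset.univ_nonempty
  have hlogZ : (1 - α) / α * Real.log (∑ A, c A ^ (1 / (1 - α))) =
      1 / α * Real.log ((∑ A, c A ^ (1 / (1 - α))) ^ (1 - α)) := by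
    rw [Real.log_rpow hZpos]
    ring
  obtain ⟨⟨p, hp, hp1, hval⟩, hub⟩ :=
    Real.isGreatest_sum_mul_rpow hα0 hα1 (fun A => (hc A).le) hZpos
  rw [hZ, hlogZ]
  refine ⟨⟨p, hp, hp1, by rw [hobj p hp, hval]⟩, ?_⟩
  rintro t ⟨p, hp, hp1, rfl⟩
  rw [hobj p hp]
  gcongr
  · exact Real.sum_mul_rpow_pos _ (fun A _ => hc A) (fun A _ => hp A) (hp1 ▸ one_pos)
  · exact hub ⟨p, hp, hp1, rfl⟩

/-- constrained optimization over the probability simplex: the supremum of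
`(1/α) log [Σ_A q_A (p_A/w_A)^α e^{α s_A}]` over probability distributions `(p_A)` is
attained and equals `((1-α)/α) log [Σ_A q_A^{1/(1-α)} w_A^{-α/(1-α)} e^{α s_A/(1-α)}]`. -/
theorem simplex_sup_renyi {ι : Type*} [Fintype ι] [Nonempty ι]
    (α : ℝ) (hα : α ∈ Set.Ioo (0 : ℝ) 1)
    (q w : ι → ℝ) (hq : ∀ A, 0 < q A) (hq1 : ∑ A, q A = 1)
    (hw : ∀ A, 0 < w A) (hw1 : ∑ A, w A = 1) (s : ι → ℝ) :
    IsGreatest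
      {t : ℝ | ∃ p : ι → ℝ, (∀ A, 0 ≤ p A) ∧ (∑ A, p A = 1) ∧
        t = (1 / α) * Real.log (∑ A, q A * (p A / w A) ^ α * Real.exp (α * s A))}
      (((1 - α) / α) *
        Real.log (∑ A, q A ^ (1 / (1 - α)) * w A ^ (-α / (1 - α)) *
          Real.exp (α * s A / (1 - α)))) :=
  simplex_sup_renyi_general α hα q w hq hw s
end
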